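/- Let G' and G'' be two finite directed graphs on the same vertex set V, each having exactly one root component (possibly different ones). Then there is a sequence G' = G_0, G_1, …, G_k = G'' where consecutive graphs differ in at most one edge and every intermediate graph G_i has exactly one root component. -/

import Mathlib

def reach {V : Type*} (G : V → V → Prop) : V → V → Prop := Relation.ReflTransGen G

def isSCC {V : Type*} (G : V → V → Prop) (C : Set V) : Prop :=
  C.Nonempty ∧ ∀ p ∈ C, ∀ v, v ∈ C ↔ (reach G p v ∧ reach G v p)

def isRootComponent {V : Type*} (G : V → V → Prop) (R : Set V) : Prop :=
  isSCC G R ∧ ∀ p ∈ R, ∀ q, G q p → q ∈ R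

def diffAtMostOneEdge {V : Type*} (G H : V → V → Prop) : Prop :=
  ∃ a b : V, ∀ x y : V, (x ≠ a ∨ y ≠ b) → (G x y ↔ H x y)

section Aux
variable {V : Type*}

lemma reach_mono {G H : V → V → Prop} (h : ∀ x y, G x y → H x y) {a b : V}
    (hr : reach G a b) : reach H a b :=
  Relation.ReflTransGen.mono h a b hr

lemma root_closed {G : V → V → Prop} {C : Set V} (hC : isRootComponent G C) {r q : V}
    (hr : r ∈ C) (h : reach G q r) : q ∈ C := by
  induction h using Relation.ReflTransGen.head_induction_on with
  | refl => exact hr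
  | head h' _ ih => exact hC.2 _ ih _ h'

lemma exists_root_reaching [Fintype V] (G : V → V → Prop) (v : V) :
    ∃ C : Set V, isRootComponent G C ∧ ∃ p ∈ C, reach G p v := by
  classical
  have hne : Nonempty {u : V // reach G u v} := ⟨⟨v, Relation.ReflTransGen.refl⟩⟩
  obtain ⟨p, hp⟩ := Finite.exists_min
    (fun u : {u : V // reach G u v} => Set.ncard {w : V | reach G w u.1})
  have key : ∀ q, reach G q p.1 → reach G p.1 q := by
    intro q hq
    by_contra hnq
    have hsub : {w : V | reach G w q} ⊂ {w : V | reach G w p.1} := by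
      constructor
      · intro w hw
        exact hw.trans hq
      · intro hss
        exact hnq (hss (Relation.ReflTransGen.refl : reach G p.1 p.1))
    have hlt : Set.ncard {w : V | reach G w q} < Set.ncard {w : V | reach G w p.1} :=
      Set.ncard_lt_ncard hsub (Set.toFinite _)
    have hge : Set.ncard {w : V | reach G w p.1} ≤ Set.ncard {w : V | reach G w q} :=
      hp ⟨q, hq.trans p.2⟩
    omega
  refine ⟨{w : V | reach G p.1 w ∧ reach G w p.1}, ⟨⟨⟨p.1, Relation.ReflTransGen.refl,
    Relation.ReflTransGen.refl⟩, ?_⟩, ?_⟩, p.1,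
    ⟨Relation.ReflTransGen.refl, Relation.ReflTransGen.refl⟩, p.2⟩
  · rintro p' ⟨hpp', hp'p⟩ w
    constructor
    · rintro ⟨hpw, hwp⟩
      exact ⟨hp'p.trans hpw, hwp.trans hpp'⟩
    · rintro ⟨hp'w, hwp'⟩
      exact ⟨hpp'.trans hp'w, hwp'.trans hp'p⟩
  · rintro p' ⟨hpp', hp'p⟩ q hq
    have hqp : reach G q p.1 := (Relation.ReflTransGen.single hq).trans hp'p
    exact ⟨key q hqp, hqp⟩

lemma hub_of_unique [Fintype V] {G : V → V → Prop}
    (h : ∃! R : Set V, isRootComponent G R) : ∃ p, ∀ v, reach G p v := by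
  obtain ⟨R, hR, huniq⟩ := h
  obtain ⟨p0, hp0⟩ := hR.1.1
  refine ⟨p0, fun v => ?_⟩
  obtain ⟨C, hC, p, hpC, hpv⟩ := exists_root_reaching G v
  have hCR : C = R := huniq C hC
  subst hCR
  exact ((hR.1.2 p0 hp0 p).mp hpC).1.trans hpv

lemma unique_root_of_le [Fintype V] {G H : V → V → Prop} (hle : ∀ x y, G x y → H x y)
    (h : ∃! R : Set V, isRootComponent G R) : ∃! R : Set V, isRootComponent H R := by
  obtain ⟨p0, hp0⟩ := hub_of_unique h
  have hubH : ∀ v, reach H p0 v := fun v => reach_mono hle (hp0 v)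
  obtain ⟨C, hC, -⟩ := exists_root_reaching H p0
  refine ⟨C, hC, fun R' hR' => ?_⟩
  have hmem : ∀ {D : Set V}, isRootComponent H D → p0 ∈ D := by
    intro D hD
    obtain ⟨d, hd⟩ := hD.1.1
    exact root_closed hD hd (hubH d)
  ext w
  exact (hR'.1.2 p0 (hmem hR') w).trans (hC.1.2 p0 (hmem hC) w).symm

end Aux

/-- If `G'` and `G''` on the same vertex set each have exactly one root
component (possibly different), then there is a sequence of graphs from `G'`
to `G''`, consecutive ones differing in at most one edge, every graph in the
sequence having exactly one root component. -/
theorem graph_sequence_single_root {V : Type*} [Fintype V]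
    (G' G'' : V → V → Prop)
    (h' : ∃! R : Set V, isRootComponent G' R)
    (h'' : ∃! R : Set V, isRootComponent G'' R) :
    ∃ (k : ℕ) (H : ℕ → V → V → Prop),
      H 0 = G' ∧ H k = G'' ∧
      (∀ i < k, diffAtMostOneEdge (H i) (H (i + 1))) ∧
      (∀ i ≤ k, ∃! R : Set V, isRootComponent (H i) R) := by
  classical
  obtain ⟨R, hR⟩ := h'.exists
  obtain ⟨p0, hp0⟩ := hR.1.1
  have hV : Nonempty V := ⟨p0⟩
  set n := Fintype.card (V × V) with hn
  have hnpos : 0 < n := Fintype.card_pos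
  let e : Fin n ≃ V × V := (Fintype.equivFin (V × V)).symm
  let idx : V → V → ℕ := fun x y => (e.symm (x, y) : ℕ)
  have hidxlt : ∀ x y, idx x y < n := fun x y => (e.symm (x, y)).isLt
  have hidx : ∀ (m : Fin n) (x y : V), (x ≠ (e m).1 ∨ y ≠ (e m).2) → idx x y ≠ (m : ℕ) := by
    intro m x y hxy hEq
    have h1 : e.symm (x, y) = m := Fin.ext hEq
    have h2 : (x, y) = e m := by rw [← h1, Equiv.apply_symm_apply]
    rcases hxy with h | h
    · exact h (congrArg Prod.fst h2)
    · exact h (congrArg Prod.snd h2)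
  let H1 : ℕ → V → V → Prop := fun j x y => G' x y ∨ idx x y < j
  let H2 : ℕ → V → V → Prop := fun j x y => G'' x y ∨ j ≤ idx x y
  refine ⟨2 * n, fun i => if i ≤ n then H1 i else H2 (i - n), ?_, ?_, ?_, ?_⟩
  · simp only [Nat.zero_le, if_pos]
    funext x y
    simp [H1]
  · have h2n : ¬ (2 * n ≤ n) := by omega
    simp only [if_neg h2n]
    have : 2 * n - n = n := by omega
    rw [this]
    funext x y
    simp [H2, Nat.not_le.mpr (hidxlt x y)]
  · intro i hi
    rcases lt_trichotomy i n with hlt | heq | hgt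
    · -- phase 1 step
      beta_reduce
      rw [if_pos (le_of_lt hlt), if_pos (by omega : i + 1 ≤ n)]
      refine ⟨(e ⟨i, hlt⟩).1, (e ⟨i, hlt⟩).2, fun x y hxy => ?_⟩
      have hne := hidx ⟨i, hlt⟩ x y hxy
      simp only [H1]
      constructor
      · rintro (h | h)
        · exact Or.inl h
        · exact Or.inr (by omega)
      · rintro (h | h)
        · exact Or.inl h
        · exact Or.inr (by simp at hne; omega)
    · -- transition step: H1 n to H2 1
      subst heq
      beta_reduce
      rw [if_pos le_rfl, if_neg (by omega : ¬ (n + 1 ≤ n)), (by omega : n + 1 - n = 1)]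
      refine ⟨(e ⟨0, hnpos⟩).1, (e ⟨0, hnpos⟩).2, fun x y hxy => ?_⟩
      have hne := hidx ⟨0, hnpos⟩ x y hxy
      simp only [H1, H2]
      constructor
      · intro _
        exact Or.inr (by simp at hne; omega)
      · intro _
        exact Or.inr (hidxlt x y)
    · -- phase 2 step
      have hjlt : i - n < n := by omega
      beta_reduce
      rw [if_neg (by omega : ¬ (i ≤ n)), if_neg (by omega : ¬ (i + 1 ≤ n)),
        (by omega : i + 1 - n = (i - n) + 1)]
      refine ⟨(e ⟨i - n, hjlt⟩).1, (e ⟨i - n, hjlt⟩).2, fun x y hxy => ?_⟩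
      have hne := hidx ⟨i - n, hjlt⟩ x y hxy
      simp only [H2]
      constructor
      · rintro (h | h)
        · exact Or.inl h
        · exact Or.inr (by simp at hne; omega)
      · rintro (h | h)
        · exact Or.inl h
        · exact Or.inr (by omega)
  · intro i _
    by_cases hi : i ≤ n
    · beta_reduce
      rw [if_pos hi]
      exact unique_root_of_le (fun x y h => Or.inl h) h'
    · beta_reduce
      rw [if_neg hi]
      exact unique_root_of_le (fun x y h => Or.inl h) h''
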